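/- arXiv:2507.19965 — 6 statements merged into one kernel-verified Lean document; each statement's English description precedes it below -/
import Mathlib

section
/- Let A and Ã be n×n real matrices and x₀ ∈ ℝⁿ. If Aⁱx₀ = Ãⁱx₀ for every i = 0, 1, …, n, then A^{n+1}x₀ = Ã^{n+1}x₀. -/
private lemma sum_mulVec_aux {n : ℕ} (s : Finset ℕ) (f : ℕ → Matrix (Fin n) (Fin n) ℝ)
    (x : Fin n → ℝ) : (∑ i ∈ s, f i).mulVec x = ∑ i ∈ s, (f i).mulVec x := by
  induction s using Finset.induction with
  | empty => simp [Matrix.zero_mulVec]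
  | insert _ _ hi ih => simp [Finset.sum_insert hi, Matrix.add_mulVec, ih]

private lemma mulVec_sum_aux {n : ℕ} (M : Matrix (Fin n) (Fin n) ℝ) (s : Finset ℕ)
    (f : ℕ → Fin n → ℝ) : M.mulVec (∑ i ∈ s, f i) = ∑ i ∈ s, M.mulVec (f i) := by
  induction s using Finset.induction with
  | empty => simp [Matrix.mulVec_zero]
  | insert _ _ hi ih => simp [Finset.sum_insert hi, Matrix.mulVec_add, ih]


/-- If `A^i x₀ = Ã^i x₀` for every `i = 0, 1, …, n`, then `A^(n+1) x₀ = Ã^(n+1) x₀`. -/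
theorem pow_succ_mulVec_eq_of_pow_mulVec_eq (n : ℕ)
    (A Atil : Matrix (Fin n) (Fin n) ℝ) (x₀ : Fin n → ℝ)
    (h : ∀ i : ℕ, i ≤ n → (A ^ i).mulVec x₀ = (Atil ^ i).mulVec x₀) :
    (A ^ (n + 1)).mulVec x₀ = (Atil ^ (n + 1)).mulVec x₀ := by
  set c : ℕ → ℝ := fun i => A.charpoly.coeff i with hc
  -- Cayley–Hamilton at the level of matrices
  have hCH : ∑ i ∈ Finset.range (n + 1), c i • A ^ i = 0 := by
    have h0 := Matrix.aeval_self_charpoly A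
    have hd : A.charpoly.natDegree < n + 1 := by
      rw [Matrix.charpoly_natDegree_eq_dim]; simp
    rwa [Polynomial.aeval_eq_sum_range' hd] at h0
  have hcn : c n = 1 := by
    have := Matrix.charpoly_monic A
    have hd : A.charpoly.natDegree = n := by
      rw [Matrix.charpoly_natDegree_eq_dim]; simp
    simpa [hc, hd] using this.coeff_natDegree
  -- A^n = -∑_{i<n} c i • A^i
  have hAn : A ^ n = -∑ i ∈ Finset.range n, c i • A ^ i := by
    rw [Finset.sum_range_succ, hcn, one_smul] at hCH
    linear_combination (norm := abel) hCH
  have key : (A ^ n).mulVec x₀ = -∑ i ∈ Finset.range n, c i • (A ^ i).mulVec x₀ := by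
    rw [hAn, Matrix.neg_mulVec]
    congr 1
    rw [sum_mulVec_aux]
    exact Finset.sum_congr rfl fun i _ => Matrix.smul_mulVec _ _ _
  have key' : (Atil ^ n).mulVec x₀ = -∑ i ∈ Finset.range n, c i • (Atil ^ i).mulVec x₀ := by
    rw [← h n le_rfl, key]
    congr 1
    exact Finset.sum_congr rfl fun i hi => by
      rw [h i (le_of_lt (Finset.mem_range.mp hi))]
  calc (A ^ (n + 1)).mulVec x₀
      = A.mulVec ((A ^ n).mulVec x₀) := by
        rw [Matrix.mulVec_mulVec, ← pow_succ']
    _ = -∑ i ∈ Finset.range n, c i • (A ^ (i + 1)).mulVec x₀ := by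
        rw [key, Matrix.mulVec_neg]
        congr 1
        rw [mulVec_sum_aux]
        exact Finset.sum_congr rfl fun i _ => by
          rw [Matrix.mulVec_smul, Matrix.mulVec_mulVec, ← pow_succ']
    _ = -∑ i ∈ Finset.range n, c i • (Atil ^ (i + 1)).mulVec x₀ := by
        congr 1
        exact Finset.sum_congr rfl fun i hi => by
          rw [h (i + 1) (Finset.mem_range.mp hi)]
    _ = Atil.mulVec ((Atil ^ n).mulVec x₀) := by
        rw [key', Matrix.mulVec_neg]
        congr 1
        rw [mulVec_sum_aux]
        exact Finset.sum_congr rfl fun i _ => by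
          rw [Matrix.mulVec_smul, Matrix.mulVec_mulVec, ← pow_succ']
    _ = (Atil ^ (n + 1)).mulVec x₀ := by
        rw [Matrix.mulVec_mulVec, ← pow_succ']
end

section
/- Let A and Ã be n×n real matrices and x₀ ∈ ℝⁿ. If Aⁱx₀ = Ãⁱx₀ for every i = 0, 1, …, n, then Aᵏx₀ = Ãᵏx₀ for every natural number k. -/
theorem cayley_aux (n : ℕ) (A : Matrix (Fin n) (Fin n) ℝ) :
    A ^ n = ∑ i ∈ Finset.range n, (-(A.charpoly.coeff i)) • A ^ i := by
  have hdeg : A.charpoly.natDegree = n := by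
    rw [Matrix.charpoly_natDegree_eq_dim, Fintype.card_fin]
  have h0 := A.aeval_self_charpoly
  rw [Polynomial.aeval_eq_sum_range, hdeg, Finset.sum_range_succ] at h0
  have hc : A.charpoly.coeff n = 1 := by
    have := A.charpoly_monic.coeff_natDegree
    rwa [hdeg] at this
  rw [hc, one_smul] at h0
  have : A ^ n = -(∑ x ∈ Finset.range n, A.charpoly.coeff x • A ^ x) := by
    linear_combination (norm := abel) h0
  rw [this, ← Finset.sum_neg_distrib]
  exact Finset.sum_congr rfl fun i _ => (neg_smul _ _).symm

theorem mulVec_sum_smul (n : ℕ) (M : Matrix (Fin n) (Fin n) ℝ) (s : Finset ℕ)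
    (c : ℕ → ℝ) (v : ℕ → Fin n → ℝ) :
    M.mulVec (∑ i ∈ s, c i • v i) = ∑ i ∈ s, c i • M.mulVec (v i) := by
  rw [← Matrix.mulVecLin_apply, map_sum]
  simp [Matrix.mulVecLin_apply]

theorem sum_smul_mulVec (n : ℕ) (s : Finset ℕ) (c : ℕ → ℝ)
    (M : ℕ → Matrix (Fin n) (Fin n) ℝ) (v : Fin n → ℝ) :
    (∑ i ∈ s, c i • M i).mulVec v = ∑ i ∈ s, c i • (M i).mulVec v := by
  induction s using Finset.induction with
  | empty => simp
  | insert _ _ hj ih =>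
    simp [Finset.sum_insert hj, Matrix.add_mulVec, Matrix.smul_mulVec, ih]

/-- If `A^i x₀ = Ã^i x₀` for every `i = 0, 1, …, n`, then `A^k x₀ = Ã^k x₀` for every `k`. -/
theorem pow_mulVec_eq_of_pow_mulVec_eq_le (n : ℕ)
    (A Atil : Matrix (Fin n) (Fin n) ℝ) (x₀ : Fin n → ℝ)
    (h : ∀ i : ℕ, i ≤ n → (A ^ i).mulVec x₀ = (Atil ^ i).mulVec x₀) :
    ∀ k : ℕ, (A ^ k).mulVec x₀ = (Atil ^ k).mulVec x₀ := by
  intro k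
  induction k using Nat.strong_induction_on with
  | _ k ih =>
    by_cases hk : k ≤ n
    · exact h k hk
    push_neg at hk
    set c : ℕ → ℝ := fun i => -(A.charpoly.coeff i) with hc
    have hsplit : k - n + n = k := Nat.sub_add_cancel hk.le
    calc (A ^ k).mulVec x₀
        = (A ^ (k - n)).mulVec ((A ^ n).mulVec x₀) := by
          rw [Matrix.mulVec_mulVec, ← pow_add, hsplit]
      _ = (A ^ (k - n)).mulVec (∑ i ∈ Finset.range n, c i • (A ^ i).mulVec x₀) := by
          rw [cayley_aux n A, sum_smul_mulVec]
      _ = ∑ i ∈ Finset.range n, c i • (A ^ (k - n + i)).mulVec x₀ := by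
          rw [mulVec_sum_smul]
          refine Finset.sum_congr rfl fun i _ => ?_
          rw [Matrix.mulVec_mulVec, ← pow_add]
      _ = ∑ i ∈ Finset.range n, c i • (Atil ^ (k - n + i)).mulVec x₀ := by
          refine Finset.sum_congr rfl fun i hi => ?_
          have : k - n + i < k := by
            have := Finset.mem_range.mp hi
            omega
          rw [ih _ this]
      _ = (Atil ^ (k - n)).mulVec (∑ i ∈ Finset.range n, c i • (Atil ^ i).mulVec x₀) := by
          rw [mulVec_sum_smul]
          refine Finset.sum_congr rfl fun i _ => ?_
          rw [Matrix.mulVec_mulVec, ← pow_add]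
      _ = (Atil ^ (k - n)).mulVec ((Atil ^ n).mulVec x₀) := by
          have hin : (∑ i ∈ Finset.range n, c i • (Atil ^ i).mulVec x₀)
              = (Atil ^ n).mulVec x₀ := by
            rw [← h n le_rfl, cayley_aux n A, sum_smul_mulVec]
            refine Finset.sum_congr rfl fun i hi => ?_
            rw [← h i (le_of_lt (Finset.mem_range.mp hi))]
          rw [hin]
      _ = (Atil ^ k).mulVec x₀ := by
          rw [Matrix.mulVec_mulVec, ← pow_add, hsplit]
end

section
/- Let A and Ã be n×n real matrices and x₀ ∈ ℝⁿ. If Aⁱx₀ = Ãⁱx₀ for every i = 0, 1, …, n, then exp(tA)x₀ = exp(tÃ)x₀ for every t ∈ ℝ; that is, the two linear systems ẋ = Ax and ẋ = Ãx produce identical solution trajectories from the initial state x(0) = x₀. -/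
open Polynomial Finset

/-- `M ↦ M.mulVec v` as a linear map. -/
def mulVecAtL (n : ℕ) (v : Fin n → ℝ) : Matrix (Fin n) (Fin n) ℝ →ₗ[ℝ] (Fin n → ℝ) where
  toFun M := M.mulVec v
  map_add' M N := Matrix.add_mulVec M N v
  map_smul' c M := Matrix.smul_mulVec c M v

/-- Evaluate a polynomial at a matrix, applied to a vector, as a finite sum. -/
lemma aeval_mulVec_eq_sum {n N : ℕ} (M : Matrix (Fin n) (Fin n) ℝ) (v : Fin n → ℝ)
    (q : Polynomial ℝ) (hq : q.natDegree < N) :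
    (Polynomial.aeval M q).mulVec v = ∑ i ∈ Finset.range N, q.coeff i • (M ^ i).mulVec v := by
  rw [Polynomial.aeval_eq_sum_range' hq]
  show mulVecAtL n v (∑ i ∈ Finset.range N, q.coeff i • M ^ i) = _
  rw [map_sum]
  exact Finset.sum_congr rfl fun i _ => by rw [map_smul]; rfl

lemma pow_mulVec_eq_all (n : ℕ) (A Atil : Matrix (Fin n) (Fin n) ℝ) (x₀ : Fin n → ℝ)
    (h : ∀ i : ℕ, i ≤ n → (A ^ i).mulVec x₀ = (Atil ^ i).mulVec x₀) :
    ∀ m : ℕ, (A ^ m).mulVec x₀ = (Atil ^ m).mulVec x₀ := by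
  rcases Nat.eq_zero_or_pos n with rfl | hn
  · intro m; exact Subsingleton.elim _ _
  · set q : Polynomial ℝ := X ^ n - A.charpoly with hqdef
    have hdegq : q.natDegree < n := by
      rcases eq_or_ne q 0 with h0 | h0
      · simpa [h0] using hn
      · rw [Polynomial.natDegree_lt_iff_degree_lt h0]
        have hd : (X ^ n - A.charpoly).degree < (X ^ n : Polynomial ℝ).degree := by
          apply Polynomial.degree_sub_lt
          · rw [A.charpoly_degree_eq_dim, Polynomial.degree_X_pow]
            simp
          · exact pow_ne_zero _ Polynomial.X_ne_zero
          · simp [Polynomial.Monic.leadingCoeff A.charpoly_monic]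
        simpa [hqdef, Polynomial.degree_X_pow] using hd
    have hAn : A ^ n = Polynomial.aeval A q := by
      rw [hqdef, map_sub, Matrix.aeval_self_charpoly, sub_zero, map_pow, Polynomial.aeval_X]
    have key : (A ^ n).mulVec x₀ = ∑ i ∈ Finset.range n, q.coeff i • (A ^ i).mulVec x₀ := by
      rw [hAn]; exact aeval_mulVec_eq_sum A x₀ q hdegq
    have keyT : (Atil ^ n).mulVec x₀ = ∑ i ∈ Finset.range n, q.coeff i • (Atil ^ i).mulVec x₀ := by
      rw [← h n le_rfl, key]
      exact Finset.sum_congr rfl fun i hi => by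
        rw [h i (le_of_lt (Finset.mem_range.mp hi))]
    have mulVec_pow_sum : ∀ (B : Matrix (Fin n) (Fin n) ℝ) (k : ℕ),
        (B ^ k).mulVec (∑ i ∈ Finset.range n, q.coeff i • (B ^ i).mulVec x₀)
          = ∑ i ∈ Finset.range n, q.coeff i • (B ^ (k + i)).mulVec x₀ := by
      intro B k
      show (B ^ k).mulVecLin _ = _
      rw [map_sum]
      exact Finset.sum_congr rfl fun i _ => by
        rw [map_smul, Matrix.mulVecLin_apply, Matrix.mulVec_mulVec, ← pow_add]
    intro m
    induction m using Nat.strong_induction_on with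
    | _ m ih =>
      rcases le_or_gt m n with hm | hm
      · exact h m hm
      · obtain ⟨k, rfl⟩ : ∃ k, m = k + n := ⟨m - n, (Nat.sub_add_cancel hm.le).symm⟩
        calc (A ^ (k + n)).mulVec x₀
            = (A ^ k).mulVec ((A ^ n).mulVec x₀) := by
              rw [Matrix.mulVec_mulVec, ← pow_add]
          _ = ∑ i ∈ Finset.range n, q.coeff i • (A ^ (k + i)).mulVec x₀ := by
              rw [key, mulVec_pow_sum A k]
          _ = ∑ i ∈ Finset.range n, q.coeff i • (Atil ^ (k + i)).mulVec x₀ := by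
              exact Finset.sum_congr rfl fun i hi => by
                rw [ih (k + i) (by have := Finset.mem_range.mp hi; omega)]
          _ = (Atil ^ k).mulVec ((Atil ^ n).mulVec x₀) := by
              rw [keyT, mulVec_pow_sum Atil k]
          _ = (Atil ^ (k + n)).mulVec x₀ := by
              rw [Matrix.mulVec_mulVec, ← pow_add]

/-- If `A^i x₀ = Ã^i x₀` for every `i = 0, 1, …, n`, then the two linear systems
`ẋ = A x` and `ẋ = Ã x` produce identical solution trajectories from `x(0) = x₀`:
`exp(tA) x₀ = exp(tÃ) x₀` for every `t ∈ ℝ`. -/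
theorem exp_smul_mulVec_eq_of_pow_mulVec_eq (n : ℕ)
    (A Atil : Matrix (Fin n) (Fin n) ℝ) (x₀ : Fin n → ℝ)
    (h : ∀ i : ℕ, i ≤ n → (A ^ i).mulVec x₀ = (Atil ^ i).mulVec x₀) :
    ∀ t : ℝ, (NormedSpace.exp (t • A)).mulVec x₀ = (NormedSpace.exp (t • Atil)).mulVec x₀ := by
  intro t
  letI : SeminormedRing (Matrix (Fin n) (Fin n) ℝ) := Matrix.linftyOpSemiNormedRing
  letI : NormedRing (Matrix (Fin n) (Fin n) ℝ) := Matrix.linftyOpNormedRing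
  letI : NormedAlgebra ℝ (Matrix (Fin n) (Fin n) ℝ) := Matrix.linftyOpNormedAlgebra
  have hpow := pow_mulVec_eq_all n A Atil x₀ h
  let L : Matrix (Fin n) (Fin n) ℝ →L[ℝ] (Fin n → ℝ) :=
    LinearMap.toContinuousLinearMap (mulVecAtL n x₀)
  have hmap : ∀ B : Matrix (Fin n) (Fin n) ℝ,
      (NormedSpace.exp (t • B)).mulVec x₀
        = ∑' k : ℕ, ((Nat.factorial k : ℝ)⁻¹ * t ^ k) • (B ^ k).mulVec x₀ := by
    intro B
    have hs : Summable fun k : ℕ => ((Nat.factorial k : ℝ)⁻¹) • (t • B) ^ k :=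
      NormedSpace.expSeries_summable' (𝕂 := ℝ) (t • B)
    have h1 : (NormedSpace.exp (t • B)).mulVec x₀
        = L (∑' k : ℕ, ((Nat.factorial k : ℝ)⁻¹) • (t • B) ^ k) := by
      rw [NormedSpace.exp_eq_tsum (𝕂 := ℝ)]
      rfl
    rw [h1, L.map_tsum hs]
    refine tsum_congr fun k => ?_
    show mulVecAtL n x₀ (((Nat.factorial k : ℝ)⁻¹) • (t • B) ^ k) = _
    rw [map_smul, _root_.smul_pow, map_smul]
    show ((Nat.factorial k : ℝ)⁻¹) • t ^ k • (B ^ k).mulVec x₀ = _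
    simp [mul_smul]
  rw [hmap A, hmap Atil]
  exact tsum_congr fun k => by rw [hpow k]
end

section
/- Let A and Â be n×n real matrices, let Λ₀ be an n×N real matrix, and define the data matrices Λᵢ := Aⁱ Λ₀ for i = 0, 1, …, n. Suppose Â Λᵢ = Λ_{i+1} for every i = 0, 1, …, n−1, and suppose x₀ ∈ ℝⁿ is one of the column vectors of Λ₀. Then exp(tÂ)x₀ = exp(tA)x₀ for every t ∈ ℝ; that is, the trajectory generated by ẋ = Âx from x(0) = x₀ is identical to the trajectory generated by ẋ = Ax from the same initial state. -/
open Matrix NormedSpace Polynomial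

/-- mulVec by a fixed vector, as a linear map in the matrix. -/
noncomputable def mulVecL (n : ℕ) (x₀ : Fin n → ℝ) :
    Matrix (Fin n) (Fin n) ℝ →ₗ[ℝ] (Fin n → ℝ) where
  toFun M := M.mulVec x₀
  map_add' M N := Matrix.add_mulVec M N x₀
  map_smul' c M := by
    funext i
    simp [Matrix.mulVec, dotProduct, Finset.mul_sum, mul_assoc]

theorem pow_data_eq (n N : ℕ)
    (A Ahat : Matrix (Fin n) (Fin n) ℝ) (Λ₀ : Matrix (Fin n) (Fin N) ℝ)
    (h : ∀ i : ℕ, i < n → Ahat * (A ^ i * Λ₀) = A ^ (i + 1) * Λ₀) :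
    ∀ k : ℕ, Ahat ^ k * Λ₀ = A ^ k * Λ₀ := by
  -- first: the hypothesis extends to all powers
  have key : ∀ k : ℕ, Ahat * (A ^ k * Λ₀) = A ^ (k + 1) * Λ₀ := by
    intro k
    rcases Nat.eq_zero_or_pos n with hn | hn
    · apply Matrix.ext; intro i _; exact absurd i.2 (by omega)
    have hcard : A.charpoly.natDegree = n := by
      simp [A.charpoly_natDegree_eq_dim]
    have hne1 : A.charpoly ≠ 1 := by
      intro h1
      rw [h1, Polynomial.natDegree_one] at hcard
      omega
    have hdeg : (X ^ k %ₘ A.charpoly).natDegree < n := by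
      have := Polynomial.natDegree_modByMonic_lt (X ^ k) A.charpoly_monic hne1
      omega
    have hpow : A ^ k = Polynomial.aeval A (X ^ k %ₘ A.charpoly) :=
      A.pow_eq_aeval_mod_charpoly k
    have hsum : A ^ k = ∑ i ∈ Finset.range n, (X ^ k %ₘ A.charpoly).coeff i • A ^ i := by
      rw [hpow, Polynomial.aeval_eq_sum_range' hdeg]
    rw [hsum, Matrix.sum_mul, Matrix.mul_sum]
    have : ∀ i ∈ Finset.range n,
        Ahat * ((X ^ k %ₘ A.charpoly).coeff i • A ^ i * Λ₀)
          = A * ((X ^ k %ₘ A.charpoly).coeff i • A ^ i * Λ₀) := by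
      intro i hi
      rw [Matrix.smul_mul, Matrix.mul_smul, Matrix.mul_smul]
      congr 1
      rw [h i (Finset.mem_range.mp hi), pow_succ', Matrix.mul_assoc]
    rw [Finset.sum_congr rfl this, ← Matrix.mul_sum, ← Matrix.sum_mul, ← hsum,
      ← Matrix.mul_assoc, ← pow_succ']
  intro k
  induction k with
  | zero => simp
  | succ k ih =>
    rw [pow_succ', Matrix.mul_assoc, ih, key k]

/-- Data matrices `Λᵢ := Aⁱ Λ₀`. If `Â Λᵢ = Λ_{i+1}` for every `i = 0, …, n−1` and `x₀`
is one of the columns of `Λ₀`, then the trajectory of `ẋ = Â x` from `x₀` coincides with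
that of `ẋ = A x`: `exp(tÂ) x₀ = exp(tA) x₀` for every `t ∈ ℝ`. -/
theorem trajectory_identity_of_data_consistency (n N : ℕ)
    (A Ahat : Matrix (Fin n) (Fin n) ℝ) (Λ₀ : Matrix (Fin n) (Fin N) ℝ) (x₀ : Fin n → ℝ)
    (h : ∀ i : ℕ, i < n → Ahat * (A ^ i * Λ₀) = A ^ (i + 1) * Λ₀)
    (hcol : ∃ j : Fin N, x₀ = fun i => Λ₀ i j) :
    ∀ t : ℝ, (NormedSpace.exp (t • Ahat)).mulVec x₀ = (NormedSpace.exp (t • A)).mulVec x₀ := by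
  obtain ⟨j, hj⟩ := hcol
  have hpowvec : ∀ k : ℕ, (Ahat ^ k).mulVec x₀ = (A ^ k).mulVec x₀ := by
    intro k
    have := pow_data_eq n N A Ahat Λ₀ h k
    funext i
    have h1 : (Ahat ^ k * Λ₀) i j = (A ^ k * Λ₀) i j := by rw [this]
    simpa [Matrix.mul_apply, Matrix.mulVec, dotProduct, hj] using h1
  intro t
  letI : SeminormedRing (Matrix (Fin n) (Fin n) ℝ) := Matrix.linftyOpSemiNormedRing
  letI : NormedRing (Matrix (Fin n) (Fin n) ℝ) := Matrix.linftyOpNormedRing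
  letI : NormedAlgebra ℝ (Matrix (Fin n) (Fin n) ℝ) := Matrix.linftyOpNormedAlgebra
  have hexp : ∀ M : Matrix (Fin n) (Fin n) ℝ,
      (exp M).mulVec x₀ = ∑' k : ℕ, ((k.factorial : ℝ)⁻¹ • M ^ k).mulVec x₀ := by
    intro M
    have hs : Summable fun k : ℕ => ((k.factorial : ℝ)⁻¹) • M ^ k :=
      NormedSpace.expSeries_summable' M
    have hcont : Continuous (mulVecL n x₀) :=
      LinearMap.continuous_of_finiteDimensional _
    have := hs.hasSum.mapL ((mulVecL n x₀).toContinuousLinearMap)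
    rw [NormedSpace.exp_eq_tsum ℝ]
    exact (this.tsum_eq).symm ▸ rfl
  rw [hexp, hexp]
  congr 1
  funext k
  rw [_root_.smul_pow, _root_.smul_pow]
  funext i
  simp only [Matrix.smul_mulVec, hpowvec k]
end

section
/- Fix ε > 0 and x₀ ∈ ℝⁿ. Let K* ∈ ℝ^{m×n} and let A_K ∈ ℝ^{n×n} be the expert closed-loop matrix, let Λ₀ ∈ ℝ^{n×N} be a data matrix having x₀ among its columns, and set Λᵢ := (A_K)ⁱ Λ₀ for i = 0, …, n. Suppose (Â, B̂, Q̂, R̂, P̂) satisfies: Q̂ symmetric positive semidefinite; R̂, P̂ symmetric with R̂ ⪰ εI and P̂ ⪰ εI; the ARE ÂᵀP̂ + P̂Â − P̂B̂R̂⁻¹B̂ᵀP̂ + Q̂ = 0; R̂⁻¹B̂ᵀP̂ = K*; and exp(t(Â − B̂K*))x*(s) can be matched in the sense that the columns of Λ₀ are points x*(t_j) = exp(t_j A_K)x₀ with t_j ≥ 0 and exp(t(Â − B̂K*))x₀ = exp(tA_K)x₀ for all t ∈ ℝ. Then, setting Z := ÂᵀP̂ and G := P̂(Â − B̂K*), the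 tuple (Z, Q̂, R̂, P̂, G) satisfies: Zᵀ + Z − (K*)ᵀR̂K* + Q̂ = 0; Zᵀ − (K*)ᵀR̂K* = G; and G Λᵢ = P̂ Λ_{i+1} for every i = 0, …, n−1. -/
open scoped Matrix
open NormedSpace

private lemma hasDerivAt_mul_exp_mulVec {n : ℕ} (C A : Matrix (Fin n) (Fin n) ℝ)
    (x : Fin n → ℝ) (t : ℝ) :
    HasDerivAt (fun s : ℝ => (C * exp (s • A)).mulVec x)
      ((C * (A * exp (t • A))).mulVec x) t := by
  letI : NormedRing (Matrix (Fin n) (Fin n) ℝ) := Matrix.linftyOpNormedRing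
  letI : NormedAlgebra ℝ (Matrix (Fin n) (Fin n) ℝ) := Matrix.linftyOpNormedAlgebra
  let L : Matrix (Fin n) (Fin n) ℝ →ₗ[ℝ] (Fin n → ℝ) :=
    { toFun := fun D => (C * D).mulVec x
      map_add' := by intro a b; simp [Matrix.mul_add, Matrix.add_mulVec]
      map_smul' := by intro c a; simp [Matrix.mul_smul, Matrix.smul_mulVec] }
  have hL : Continuous L := L.continuous_of_finiteDimensional
  have h := hasDerivAt_exp_smul_const' (𝕂 := ℝ) A t
  exact (ContinuousLinearMap.hasFDerivAt ⟨L, hL⟩).comp_hasDerivAt t h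

/-- If the trajectories of `M` and `A` from `x₀` agree, then `M * Aⁱ` and `A^(i+1)` agree
along the trajectory. -/
private lemma key_traj {n : ℕ} (M A : Matrix (Fin n) (Fin n) ℝ) (x₀ : Fin n → ℝ)
    (htraj : ∀ t : ℝ, (exp (t • M)).mulVec x₀ = (exp (t • A)).mulVec x₀) :
    ∀ (i : ℕ) (t : ℝ), ((M * A ^ i) * exp (t • A)).mulVec x₀
      = (A ^ (i + 1) * exp (t • A)).mulVec x₀ := by
  have base : ∀ t : ℝ, (M * exp (t • A)).mulVec x₀ = (A * exp (t • A)).mulVec x₀ := by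
    intro t
    have hM := hasDerivAt_mul_exp_mulVec (1 : Matrix (Fin n) (Fin n) ℝ) M x₀ t
    have hA := hasDerivAt_mul_exp_mulVec (1 : Matrix (Fin n) (Fin n) ℝ) A x₀ t
    simp only [Matrix.one_mul] at hM hA
    have hM' : HasDerivAt (fun s : ℝ => (exp (s • A)).mulVec x₀)
        ((M * exp (t • M)).mulVec x₀) t := by
      have : (fun s : ℝ => (exp (s • M)).mulVec x₀)
          = fun s : ℝ => (exp (s • A)).mulVec x₀ := funext htraj
      rwa [this] at hM
    have h2 := hM'.unique hA
    rw [← Matrix.mulVec_mulVec, ← Matrix.mulVec_mulVec, htraj t] at h2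
    rw [← Matrix.mulVec_mulVec, ← Matrix.mulVec_mulVec]
    exact h2
  intro i
  induction i with
  | zero => simpa using base
  | succ i ih =>
    intro t
    have hf := hasDerivAt_mul_exp_mulVec (M * A ^ i) A x₀ t
    have hg := hasDerivAt_mul_exp_mulVec (A ^ (i + 1)) A x₀ t
    have hfg : (fun s : ℝ => ((M * A ^ i) * exp (s • A)).mulVec x₀)
        = fun s : ℝ => (A ^ (i + 1) * exp (s • A)).mulVec x₀ := funext ih
    rw [hfg] at hf
    have h := hf.unique hg
    have e1 : (M * A ^ i) * (A * exp (t • A)) = (M * A ^ (i + 1)) * exp (t • A) := by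
      rw [pow_succ]; noncomm_ring
    have e2 : A ^ (i + 1) * (A * exp (t • A)) = A ^ (i + 1 + 1) * exp (t • A) := by
      rw [pow_succ]; noncomm_ring
    rw [e1, e2] at h
    exact h

/-- Forward direction of the equivalence between the IOC optimization problem and its
convex feasibility reformulation: from an optimal tuple `(Â, B̂, Q̂, R̂, P̂)` (feasible for
the definiteness and ARE constraints, matching the expert gain `K*`, and reproducing the
expert trajectory), the tuple `(Z, Q̂, R̂, P̂, G)` with `Z := ÂᵀP̂` and `G := P̂(Â − B̂K*)`
satisfies the constraints of the feasibility problem. -/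
theorem ioc_optimal_implies_feasible (n m N : ℕ) (ε : ℝ) (hε : 0 < ε) (x₀ : Fin n → ℝ)
    (Kstar : Matrix (Fin m) (Fin n) ℝ) (AK : Matrix (Fin n) (Fin n) ℝ)
    (Λ₀ : Matrix (Fin n) (Fin N) ℝ)
    (Ahat Qhat Phat : Matrix (Fin n) (Fin n) ℝ) (Bhat : Matrix (Fin n) (Fin m) ℝ)
    (Rhat : Matrix (Fin m) (Fin m) ℝ)
    (hQ : Qhat.PosSemidef)
    (hRsymm : Rhat.IsSymm) (hR : (Rhat - ε • (1 : Matrix (Fin m) (Fin m) ℝ)).PosSemidef)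
    (hPsymm : Phat.IsSymm) (hP : (Phat - ε • (1 : Matrix (Fin n) (Fin n) ℝ)).PosSemidef)
    (hARE : Ahatᵀ * Phat + Phat * Ahat - Phat * Bhat * Rhat⁻¹ * Bhatᵀ * Phat + Qhat = 0)
    (hgain : Rhat⁻¹ * Bhatᵀ * Phat = Kstar)
    (hcols : ∀ j : Fin N, ∃ t : ℝ, 0 ≤ t ∧
      (fun i => Λ₀ i j) = (NormedSpace.exp (t • AK)).mulVec x₀)
    (hx0col : ∃ j : Fin N, x₀ = fun i => Λ₀ i j)
    (htraj : ∀ t : ℝ,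
      (NormedSpace.exp (t • (Ahat - Bhat * Kstar))).mulVec x₀
        = (NormedSpace.exp (t • AK)).mulVec x₀)
    (Z G : Matrix (Fin n) (Fin n) ℝ)
    (hZ : Z = Ahatᵀ * Phat) (hG : G = Phat * (Ahat - Bhat * Kstar)) :
    Zᵀ + Z - Kstarᵀ * Rhat * Kstar + Qhat = 0 ∧
    Zᵀ - Kstarᵀ * Rhat * Kstar = G ∧
    (∀ i : ℕ, i < n → G * (AK ^ i * Λ₀) = Phat * (AK ^ (i + 1) * Λ₀)) := by
  -- Rhat is positive definite, hence invertible
  have hRpd : Rhat.PosDef := by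
    have h1 : (ε • (1 : Matrix (Fin m) (Fin m) ℝ)).PosDef := by
      exact Matrix.PosDef.one.smul hε
    have h2 : Rhat = (Rhat - ε • 1) + ε • 1 := by abel
    rw [h2]
    exact Matrix.PosDef.posSemidef_add hR h1
  have hRdet : IsUnit Rhat.det := (Matrix.isUnit_iff_isUnit_det _).mp hRpd.isUnit
  have hRinvT : Rhat⁻¹ᵀ = Rhat⁻¹ := by
    rw [Matrix.transpose_nonsing_inv, hRsymm.eq]
  have hK : Kstarᵀ * Rhat * Kstar = Phat * Bhat * Rhat⁻¹ * Bhatᵀ * Phat := by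
    rw [← hgain]
    simp only [Matrix.transpose_mul, hRinvT, hPsymm.eq, Matrix.transpose_transpose,
      Matrix.mul_assoc, Matrix.nonsing_inv_mul_cancel_left _ _ hRdet]
  have hZT : Zᵀ = Phat * Ahat := by
    rw [hZ, Matrix.transpose_mul, hPsymm.eq, Matrix.transpose_transpose]
  have hGeq : G = Phat * Ahat - Phat * Bhat * Rhat⁻¹ * Bhatᵀ * Phat := by
    rw [hG, ← hgain, Matrix.mul_sub]
    congr 1
    simp only [Matrix.mul_assoc]
  refine ⟨?_, ?_, ?_⟩
  · rw [hZT, hZ, hK, add_comm (Phat * Ahat) (Ahatᵀ * Phat)]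
    exact hARE
  · rw [hZT, hK, hGeq]
  · intro i hi
    set M : Matrix (Fin n) (Fin n) ℝ := Ahat - Bhat * Kstar with hM
    have key := key_traj M AK x₀ htraj
    have hcol : M * (AK ^ i * Λ₀) = AK ^ (i + 1) * Λ₀ := by
      ext a b
      obtain ⟨t, _, hc⟩ := hcols b
      have hcfun : ∀ k, Λ₀ k b = (exp (t • AK)).mulVec x₀ k := fun k => congrFun hc k
      have h1 : ∀ (C : Matrix (Fin n) (Fin n) ℝ), (C * Λ₀) a b
          = (C * exp (t • AK)).mulVec x₀ a := by
        intro C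
        rw [← Matrix.mulVec_mulVec]
        simp only [Matrix.mul_apply, Matrix.mulVec, dotProduct]
        exact Finset.sum_congr rfl fun k _ => by rw [hcfun k]; rfl
      have e1 : (M * (AK ^ i * Λ₀)) a b = ((M * AK ^ i) * Λ₀) a b := by
        rw [Matrix.mul_assoc]
      rw [e1, h1 (M * AK ^ i), h1 (AK ^ (i + 1)), key i t]
    rw [hG, Matrix.mul_assoc, hcol]
end

section
/- Fix ε > 0 and x₀ ∈ ℝⁿ. Let K* ∈ ℝ^{m×n}, let A_K ∈ ℝ^{n×n} be the expert closed-loop matrix, let Λ₀ ∈ ℝ^{n×N} be a data matrix having x₀ among its columns, and set Λᵢ := (A_K)ⁱ Λ₀ for i = 0, …, n. Suppose (Z, Q̂, R̂, P̂, G) satisfies: Zᵀ + Z − (K*)ᵀR̂K* + Q̂ = 0; Zᵀ − (K*)ᵀR̂K* = G; G Λᵢ = P̂ Λ_{i+1} for every i = 0, …, n−1; Q̂ symmetric positive semidefinite; and R̂, P̂ symmetric with R̂ ⪰ εI and P̂ ⪰ εI. Define Â := P̂⁻¹Zᵀ and B̂ := P̂⁻¹(K*)ᵀR̂. Then: (i)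 the ARE ÂᵀP̂ + P̂Â − P̂B̂R̂⁻¹B̂ᵀP̂ + Q̂ = 0 holds; (ii) R̂⁻¹B̂ᵀP̂ = K*; and (iii) exp(t(Â − B̂K*))x₀ = exp(tA_K)x₀ for every t ∈ ℝ, i.e., the closed-loop trajectory generated by the reconstructed parameters from x₀ coincides with the expert trajectory. -/
open scoped Matrix

/-- A symmetric real matrix dominating `ε • 1` with `ε > 0` is positive definite. -/
lemma ioc_posdef_aux {k : ℕ} (ε : ℝ) (hε : 0 < ε) (A : Matrix (Fin k) (Fin k) ℝ)
    (h : (A - ε • (1 : Matrix (Fin k) (Fin k) ℝ)).PosSemidef) : A.PosDef := by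
  have h1 : (ε • (1 : Matrix (Fin k) (Fin k) ℝ)).PosDef := by
    rw [Matrix.smul_one_eq_diagonal]
    exact Matrix.posDef_diagonal_iff.mpr fun _ => hε
  have h2 := h1.add_posSemidef h
  have h3 : ε • (1 : Matrix (Fin k) (Fin k) ℝ) + (A - ε • 1) = A := by abel
  rwa [h3] at h2

/-- If all powers of `X` and `Y` agree after right multiplication by `Λ`, so do the
matrix exponentials. -/
lemma ioc_exp_mul_congr {k N : ℕ} (X Y : Matrix (Fin k) (Fin k) ℝ)
    (Λ : Matrix (Fin k) (Fin N) ℝ) (h : ∀ j : ℕ, X ^ j * Λ = Y ^ j * Λ) :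
    (NormedSpace.exp X) * Λ = (NormedSpace.exp Y) * Λ := by
  letI : SeminormedRing (Matrix (Fin k) (Fin k) ℝ) := Matrix.linftyOpSemiNormedRing
  letI : NormedRing (Matrix (Fin k) (Fin k) ℝ) := Matrix.linftyOpNormedRing
  letI : NormedAlgebra ℝ (Matrix (Fin k) (Fin k) ℝ) := Matrix.linftyOpNormedAlgebra
  let L : Matrix (Fin k) (Fin k) ℝ →ₗ[ℝ] Matrix (Fin k) (Fin N) ℝ :=
    { toFun := fun A => A * Λ
      map_add' := fun a b => Matrix.add_mul a b Λ
      map_smul' := fun c a => Matrix.smul_mul c a Λ }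
  have hLc : Continuous L := LinearMap.continuous_of_finiteDimensional L
  let L' : Matrix (Fin k) (Fin k) ℝ →L[ℝ] Matrix (Fin k) (Fin N) ℝ := ⟨L, hLc⟩
  have hX := L'.map_tsum (NormedSpace.expSeries_summable' (𝕂 := ℝ) X)
  have hY := L'.map_tsum (NormedSpace.expSeries_summable' (𝕂 := ℝ) Y)
  have hL : ∀ (A : Matrix (Fin k) (Fin k) ℝ), L' A = A * Λ := fun _ => rfl
  simp only [NormedSpace.exp_eq_tsum (𝕂 := ℝ)]
  calc (∑' j : ℕ, ((j.factorial : ℝ))⁻¹ • X ^ j) * Λ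
      = L' (∑' j : ℕ, ((j.factorial : ℝ))⁻¹ • X ^ j) := rfl
    _ = ∑' j : ℕ, L' (((j.factorial : ℝ))⁻¹ • X ^ j) := hX
    _ = ∑' j : ℕ, L' (((j.factorial : ℝ))⁻¹ • Y ^ j) := by
        refine tsum_congr fun j => ?_
        rw [map_smul, map_smul, hL, hL, h j]
    _ = L' (∑' j : ℕ, ((j.factorial : ℝ))⁻¹ • Y ^ j) := hY.symm
    _ = (∑' j : ℕ, ((j.factorial : ℝ))⁻¹ • Y ^ j) * Λ := rfl

/-- Cayley–Hamilton: `A ^ n` is a linear combination of lower powers. -/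
lemma ioc_cayley_hamilton {n : ℕ} (AK : Matrix (Fin n) (Fin n) ℝ) :
    AK ^ n = ∑ i ∈ Finset.range n, (-(AK.charpoly.coeff i)) • AK ^ i := by
  have hdeg : AK.charpoly.natDegree = n := by
    simpa using AK.charpoly_natDegree_eq_dim
  have h0 := AK.aeval_self_charpoly
  rw [Polynomial.aeval_eq_sum_range' (n := n + 1) (by omega) AK] at h0
  rw [Finset.sum_range_succ] at h0
  have hc : AK.charpoly.coeff n = 1 := by
    have := AK.charpoly_monic.coeff_natDegree
    rwa [hdeg] at this
  rw [hc, one_smul] at h0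
  rw [eq_neg_of_add_eq_zero_right h0, ← Finset.sum_neg_distrib]
  exact Finset.sum_congr rfl fun i _ => (neg_smul _ _).symm

/-- Converse direction of the equivalence: from a feasible point `(Z, Q̂, R̂, P̂, G)` of the
convex reformulation, the reconstructed parameters `Â := P̂⁻¹Zᵀ`, `B̂ := P̂⁻¹(K*)ᵀR̂`
satisfy the ARE, recover the expert gain `K*`, and reproduce the expert closed-loop
trajectory from `x₀`. -/
theorem ioc_feasible_implies_optimal (n m N : ℕ) (ε : ℝ) (hε : 0 < ε) (x₀ : Fin n → ℝ)
    (Kstar : Matrix (Fin m) (Fin n) ℝ) (AK : Matrix (Fin n) (Fin n) ℝ)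
    (Λ₀ : Matrix (Fin n) (Fin N) ℝ)
    (hx0col : ∃ j : Fin N, x₀ = fun i => Λ₀ i j)
    (Z Qhat Phat G : Matrix (Fin n) (Fin n) ℝ) (Rhat : Matrix (Fin m) (Fin m) ℝ)
    (hEq1 : Zᵀ + Z - Kstarᵀ * Rhat * Kstar + Qhat = 0)
    (hEq2 : Zᵀ - Kstarᵀ * Rhat * Kstar = G)
    (hEq3 : ∀ i : ℕ, i < n → G * (AK ^ i * Λ₀) = Phat * (AK ^ (i + 1) * Λ₀))
    (hQ : Qhat.PosSemidef)
    (hRsymm : Rhat.IsSymm) (hR : (Rhat - ε • (1 : Matrix (Fin m) (Fin m) ℝ)).PosSemidef)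
    (hPsymm : Phat.IsSymm) (hP : (Phat - ε • (1 : Matrix (Fin n) (Fin n) ℝ)).PosSemidef)
    (Ahat : Matrix (Fin n) (Fin n) ℝ) (hA : Ahat = Phat⁻¹ * Zᵀ)
    (Bhat : Matrix (Fin n) (Fin m) ℝ) (hB : Bhat = Phat⁻¹ * Kstarᵀ * Rhat) :
    (Ahatᵀ * Phat + Phat * Ahat - Phat * Bhat * Rhat⁻¹ * Bhatᵀ * Phat + Qhat = 0) ∧
    (Rhat⁻¹ * Bhatᵀ * Phat = Kstar) ∧
    (∀ t : ℝ,
      (NormedSpace.exp (t • (Ahat - Bhat * Kstar))).mulVec x₀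
        = (NormedSpace.exp (t • AK)).mulVec x₀) := by
  have hPd : Phat.PosDef := ioc_posdef_aux ε hε Phat hP
  have hRd : Rhat.PosDef := ioc_posdef_aux ε hε Rhat hR
  haveI := hPd.isUnit.invertible
  haveI := hRd.isUnit.invertible
  have hPT : Phat⁻¹ᵀ = Phat⁻¹ := by
    rw [Matrix.transpose_nonsing_inv, hPsymm.eq]
  -- (ii)
  have hii : Rhat⁻¹ * Bhatᵀ * Phat = Kstar := by
    rw [hB]
    simp only [Matrix.transpose_mul, Matrix.transpose_transpose, hPT, hRsymm.eq,
      Matrix.mul_assoc, Matrix.inv_mul_cancel_left_of_invertible,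
      Matrix.mul_inv_cancel_left_of_invertible, Matrix.inv_mul_of_invertible,
      Matrix.mul_inv_of_invertible, Matrix.mul_one, Matrix.one_mul]
  -- (i)
  have hi : Ahatᵀ * Phat + Phat * Ahat - Phat * Bhat * Rhat⁻¹ * Bhatᵀ * Phat + Qhat = 0 := by
    have e3 : Phat * Bhat * Rhat⁻¹ * Bhatᵀ * Phat = Kstarᵀ * Rhat * Kstar := by
      rw [hB]
      simp only [Matrix.transpose_mul, Matrix.transpose_transpose, hPT, hRsymm.eq,
        Matrix.mul_assoc, Matrix.inv_mul_cancel_left_of_invertible,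
        Matrix.mul_inv_cancel_left_of_invertible, Matrix.inv_mul_of_invertible,
        Matrix.mul_inv_of_invertible, Matrix.mul_one, Matrix.one_mul]
    have e1 : Ahatᵀ * Phat = Z := by
      rw [hA]
      simp only [Matrix.transpose_mul, Matrix.transpose_transpose, hPT,
        Matrix.mul_assoc, Matrix.inv_mul_of_invertible, Matrix.mul_one]
    have e2 : Phat * Ahat = Zᵀ := by
      rw [hA, Matrix.mul_inv_cancel_left_of_invertible]
    rw [e1, e2, e3, ← hEq1]
    abel
  refine ⟨hi, hii, ?_⟩
  -- (iii)
  have hM : Ahat - Bhat * Kstar = Phat⁻¹ * G := by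
    rw [hA, hB, ← hEq2, Matrix.mul_sub, Matrix.mul_assoc, Matrix.mul_assoc, Matrix.mul_assoc]
  -- the one-step property for all powers, by strong induction via Cayley–Hamilton
  have key : ∀ k : ℕ, (Phat⁻¹ * G) * (AK ^ k * Λ₀) = AK ^ (k + 1) * Λ₀ := by
    intro k
    induction k using Nat.strong_induction_on with
    | _ k IH =>
      rcases lt_or_ge k n with hk | hk
      · rw [Matrix.mul_assoc, hEq3 k hk, Matrix.inv_mul_cancel_left_of_invertible]
      · obtain ⟨d, rfl⟩ : ∃ d, k = n + d := ⟨k - n, by omega⟩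
        have hpow : ∀ e : ℕ, AK ^ (n + d + e) * Λ₀
            = ∑ i ∈ Finset.range n, (-(AK.charpoly.coeff i)) • (AK ^ (d + e + i) * Λ₀) := by
          intro e
          have h1 : AK ^ (n + d + e) = AK ^ (d + e) * AK ^ n := by
            rw [← pow_add]; ring_nf
          rw [h1, ioc_cayley_hamilton AK, Matrix.mul_sum, Matrix.sum_mul]
          refine Finset.sum_congr rfl fun i _ => ?_
          rw [Matrix.mul_smul, Matrix.smul_mul, ← pow_add]
        have h0 := hpow 0
        have h1 := hpow 1
        simp only [Nat.add_zero] at h0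
        rw [h0, Matrix.mul_sum]
        simp only [Matrix.mul_smul]
        have hsum : ∑ i ∈ Finset.range n,
              (-(AK.charpoly.coeff i)) • (Phat⁻¹ * G * (AK ^ (d + i) * Λ₀))
            = ∑ i ∈ Finset.range n, (-(AK.charpoly.coeff i)) • (AK ^ (d + i + 1) * Λ₀) :=
          Finset.sum_congr rfl fun i hi => by
            rw [IH (d + i) (by have := Finset.mem_range.mp hi; omega)]
        rw [hsum, h1]
        refine Finset.sum_congr rfl fun i _ => ?_
        rw [show d + 1 + i = d + i + 1 by omega]
  -- powers of the reconstructed closed loop agree with the expert powers on Λ₀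
  have hMk : ∀ j : ℕ, (Ahat - Bhat * Kstar) ^ j * Λ₀ = AK ^ j * Λ₀ := by
    intro j
    induction j with
    | zero => simp
    | succ j ih =>
      rw [pow_succ', Matrix.mul_assoc, ih, hM, key j, pow_succ']
  intro t
  obtain ⟨j, hj⟩ := hx0col
  have hexp : (NormedSpace.exp (t • (Ahat - Bhat * Kstar))) * Λ₀
      = (NormedSpace.exp (t • AK)) * Λ₀ := by
    refine ioc_exp_mul_congr _ _ _ fun k => ?_
    rw [smul_pow, smul_pow, Matrix.smul_mul, Matrix.smul_mul, hMk k]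
  funext i
  have : ∀ (E : Matrix (Fin n) (Fin n) ℝ), E.mulVec x₀ i = (E * Λ₀) i j := by
    intro E
    simp [Matrix.mulVec, Matrix.mul_apply, hj, dotProduct]
  rw [this, this, hexp]
end
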